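/- arXiv:2502.13701 — 5 statements merged into one kernel-verified Lean document; each statement's English description precedes it below -/
import Mathlib

section
/- Let (M, u) be a causal setting in a strongly recursive causal model and let Y ⊆ V with setting y. If X is an endogenous variable that is not a descendant in the causal network of any variable in Y, then the value of X in the intervened model (M^{Y←y}, u) equals its value in (M, u). -/
open Classical

/-- A (strongly recursive) structural causal model over endogenous variables `V`
with value ranges `Val`, with the exogenous context `u` baked into the
structural equations `F`.  `dep Y X` means that the structural equation for `X`
depends on `Y` (an edge `Y → X` in the causal network). -/
structure CausalModel (V : Type*) (Val : V → Type*) where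
  dep : V → V → Prop
  F : ∀ X : V, (∀ Y : V, Val Y) → Val X
  localDep : ∀ (X : V) (v w : ∀ Y, Val Y),
    (∀ Y, dep Y X → v Y = w Y) → F X v = F X w

variable {V : Type*} {Val : V → Type*}

/-- `v` solves all structural equations of `M` (given the context). -/
def IsSolution (M : CausalModel V Val) (v : ∀ X, Val X) : Prop :=
  ∀ X, v X = M.F X v

/-- The intervention `M^{S ← a}`: the equations of the variables in `S` are
replaced by the constants prescribed by `a`. -/
noncomputable def intervene (M : CausalModel V Val) (S : Set V) (a : ∀ X, Val X) :
    CausalModel V Val where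
  dep Y X := X ∉ S ∧ M.dep Y X
  F X v := if X ∈ S then a X else M.F X v
  localDep X v w h := by
    by_cases hX : X ∈ S
    · simp only [if_pos hX]
    · simp only [if_neg hX]
      exact M.localDep X v w fun Y hY => h Y ⟨hX, hY⟩

/-- `(M, u) ⊨ φ` : `φ` holds in (any, hence the unique) solution of `M`. -/
def Sat (M : CausalModel V Val) (φ : (∀ X, Val X) → Prop) : Prop :=
  ∀ v, IsSolution M v → φ v

/-- If `X` is not a descendant in the causal network of any intervened variable
(in particular `X` is itself not intervened on), then intervening on `S` does
not change the value of `X`: the solution `w` of `M^{S ← y}` agrees with the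
solution `v` of `M` on `X`.  (Strong recursiveness: finitely many variables and
an acyclic causal network.) -/
theorem intervention_preserves_nondescendants {V : Type*} [Fintype V]
    {Val : V → Type*} (M : CausalModel V Val)
    (hacyc : ∀ X : V, ¬ Relation.TransGen M.dep X X)
    (S : Set V) (y : ∀ X, Val X) (X : V)
    (hX : ∀ W ∈ S, ¬ Relation.ReflTransGen M.dep W X)
    (v w : ∀ Z, Val Z)
    (hv : IsSolution M v) (hw : IsSolution (intervene M S y) w) :
    w X = v X := by
  have : IsIrrefl V (Relation.TransGen M.dep) := ⟨hacyc⟩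
  have hwf : WellFounded (Relation.TransGen M.dep) :=
    Finite.wellFounded_of_trans_of_irrefl _
  induction X using hwf.induction with
  | _ X ih =>
  have hXS : X ∉ S := fun h => hX X h Relation.ReflTransGen.refl
  have h1 : w X = M.F X w := by
    have := hw X
    simpa [intervene, hXS] using this
  have h2 : M.F X w = M.F X v := by
    apply M.localDep
    intro Y hY
    apply ih Y (Relation.TransGen.single hY)
    intro W hW hWY
    exact hX W hW (hWY.tail hY)
  rw [h1, h2, ← hv X]
end

section
/- Let GS be the causal CGS generated from causal setting (M, u). If all agents follow the causal strategy profile F_M, then the unique leaf-state reached corresponds to (M, u): for every endogenous variable X and value x, (X = x) is in the valuation of the leaf-state if and only if (M, u) ⊨ X = x. -/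
open Classical

variable {V : Type*} {Val : V → Type*}

/-- A strategy profile in the causal CGS: each agent (controlling an agent
variable in `Va`) chooses an action depending only on the history, i.e. on the
actions of agent variables of strictly lower agent rank `ρ`. -/
def IsStrategy (Va : Set V) (ρ : V → ℕ) (σ : ∀ X : V, (∀ Y, Val Y) → Val X) : Prop :=
  ∀ X ∈ Va, ∀ h h' : ∀ Y, Val Y,
    (∀ Y ∈ Va, ρ Y < ρ X → h Y = h' Y) → σ X h = σ X h'

/-- `a` is the play (action path to the leaf-state reached) when the agents
follow the strategy profile `σ`: each agent variable takes the action its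
strategy prescribes given the actions taken before it. -/
def IsPlay (Va : Set V) (σ : ∀ X : V, (∀ Y, Val Y) → Val X) (a : ∀ X, Val X) : Prop :=
  ∀ X ∈ Va, a X = σ X a

/-- Agent `X` follows the causal strategy profile `F_M` (Definition 4.2): at its
turn it chooses the value that `M` determines for `X` after intervening with the
actions taken so far, i.e. on the agent variables of lower rank. -/
def CausalChoice (M : CausalModel V Val) (Va : Set V) (ρ : V → ℕ)
    (σ : ∀ X : V, (∀ Y, Val Y) → Val X) (X : V) : Prop :=
  ∀ h : ∀ Y, Val Y, ∀ v, IsSolution (intervene M {Y | Y ∈ Va ∧ ρ Y < ρ X} h) v →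
    σ X h = v X

/-- Corollary 4.4: if all agents follow the causal strategy profile `F_M` in
the causal CGS generated by `(M, u)`, then the leaf-state reached corresponds
to `(M, u)`: its valuation `v` (the solution of `M` intervened with all actions
taken, by Definition 3.6 / Proposition 3.11) agrees with the solution `w` of
`(M, u)` on every endogenous variable.  `Va` are the agent variables and `ρ` the
agent ranking, compatible with the causal dependencies; strong recursiveness is
expressed by unique solvability of every intervened model. -/
theorem causal_strategy_profile_reaches_actual_setting
    {V : Type*} {Val : V → Type*} (M : CausalModel V Val)
    (Va : Set V) (ρ : V → ℕ)
    (hρ : ∀ X Y, M.dep X Y → ρ X ≤ ρ Y)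
    (hρa : ∀ X ∈ Va, ∀ Y, M.dep Y X → ρ Y < ρ X)
    (hrec : ∀ (S : Set V) (b : ∀ X, Val X), ∃! u, IsSolution (intervene M S b) u)
    (σ : ∀ X : V, (∀ Y, Val Y) → Val X)
    (hσ : IsStrategy Va ρ σ)
    (hcausal : ∀ X ∈ Va, CausalChoice M Va ρ σ X)
    (a : ∀ X, Val X) (ha : IsPlay Va σ a)
    (v w : ∀ X, Val X)
    (hv : IsSolution (intervene M Va a) v)
    (hw : IsSolution M w) :
    ∀ X, v X = w X := by
  have key : ∀ n X, X ∈ Va → ρ X < n → a X = w X := by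
    intro n
    induction n with
    | zero => intro X _ h; omega
    | succ n ih =>
      intro X hX hρX
      have hw' : IsSolution (intervene M {Y | Y ∈ Va ∧ ρ Y < ρ X} a) w := by
        intro Y
        by_cases hY : Y ∈ Va ∧ ρ Y < ρ X
        · simp only [intervene, Set.mem_setOf_eq, if_pos hY]
          exact (ih Y hY.1 (by omega)).symm
        · simp only [intervene, Set.mem_setOf_eq, if_neg hY]
          exact hw Y
      calc a X = σ X a := ha X hX
        _ = w X := hcausal X hX a w hw'
  have key' : ∀ X ∈ Va, a X = w X := fun X hX => key (ρ X + 1) X hX (Nat.lt_succ_self _)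
  have hw'' : IsSolution (intervene M Va a) w := by
    intro X
    by_cases hX : X ∈ Va
    · simp only [intervene, if_pos hX]
      exact (key' X hX).symm
    · simp only [intervene, if_neg hX]
      exact hw X
  exact fun X => congrFun ((hrec Va a).unique hv hw'') X
end

section
/- Let GS be the causal CGS generated from causal setting (M, u), let X be a set of agent variables with setting x, and let F_{X=x} be the strategy profile where the agents controlling X choose x at their turns while all other agents follow the causal strategy profile F_M. Then the unique leaf-state q reached by F_{X=x} ∘ F_M corresponds to the intervened setting (M^{X←x}, u): for all endogenous variables Z, (Z = z) ∈ π(q) iff (M^{X←x}, u) ⊨ Z = z. -/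
open Classical

variable {V : Type*} {Val : V → Type*}

/-- Lemma 4.3: if the agents controlling the agent variables in `S ⊆ Va` play
the fixed actions `x` while all other agents follow the causal strategy profile
`F_M`, then the leaf-state reached by the resulting play `a` corresponds to the
intervened setting `(M^{S ← x}, u)`: its valuation `v` (the solution of `M`
intervened with all actions taken) agrees with the solution `w` of
`M^{S ← x}` on every endogenous variable. -/
theorem deviating_strategy_leads_to_intervened_setting
    {V : Type*} {Val : V → Type*} (M : CausalModel V Val)
    (Va : Set V) (ρ : V → ℕ)
    (hρ : ∀ X Y, M.dep X Y → ρ X ≤ ρ Y)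
    (hρa : ∀ X ∈ Va, ∀ Y, M.dep Y X → ρ Y < ρ X)
    (hrec : ∀ (T : Set V) (b : ∀ X, Val X), ∃! u, IsSolution (intervene M T b) u)
    (S : Set V) (hS : S ⊆ Va) (x : ∀ X, Val X)
    (σ : ∀ X : V, (∀ Y, Val Y) → Val X)
    (hσ : IsStrategy Va ρ σ)
    (hfixed : ∀ X ∈ S, ∀ h : ∀ Y, Val Y, σ X h = x X)
    (hcausal : ∀ X ∈ Va, X ∉ S → CausalChoice M Va ρ σ X)
    (a : ∀ X, Val X) (ha : IsPlay Va σ a)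
    (v w : ∀ X, Val X)
    (hv : IsSolution (intervene M Va a) v)
    (hw : IsSolution (intervene M S x) w) :
    ∀ Z, v Z = w Z := by
  have hwS : ∀ X ∈ S, w X = x X := by
    intro X hX
    simpa [intervene, hX] using hw X
  have hwF : ∀ X, X ∉ S → w X = M.F X w := by
    intro X hX
    simpa [intervene, hX] using hw X
  -- Key claim: the play `a` agrees with `w` on all agent variables.
  have key : ∀ n, ∀ X ∈ Va, ρ X < n → a X = w X := by
    intro n
    induction n with
    | zero => intro X _ h; omega
    | succ n ih =>
      intro X hXa hXn
      by_cases hXS : X ∈ S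
      · rw [ha X hXa, hfixed X hXS, hwS X hXS]
      · -- X follows the causal strategy
        obtain ⟨u, hu, -⟩ := hrec {Y | Y ∈ Va ∧ ρ Y < ρ X} w
        have hσaw : σ X a = σ X w := by
          refine hσ X hXa a w fun Y hY hYX => ih Y hY (by omega)
        have hσw : σ X w = u X := hcausal X hXa hXS w u hu
        -- u agrees with w on T = {Y ∈ Va | ρ Y < ρ X}
        have huT : ∀ Y, Y ∈ Va → ρ Y < ρ X → u Y = w Y := by
          intro Y hYa hYX
          have := hu Y
          simp only [intervene, IsSolution] at this
          rw [this, if_pos (show Y ∈ {Y | Y ∈ Va ∧ ρ Y < ρ X} from ⟨hYa, hYX⟩)]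
        have huF : ∀ Y, ¬(Y ∈ Va ∧ ρ Y < ρ X) → u Y = M.F Y u := by
          intro Y hY
          have := hu Y
          simp only [intervene, IsSolution] at this
          rw [this, if_neg (show Y ∉ {Y | Y ∈ Va ∧ ρ Y < ρ X} from hY)]
        -- hybrid argument: u agrees with w on all variables of rank < ρ X
        have hlow : ∀ W, ρ W < ρ X → u W = w W := by
          set T' : Set V := {Y | (Y ∈ Va ∧ ρ Y < ρ X) ∨ ρ X ≤ ρ Y} with hT'
          set c : ∀ Y, Val Y := fun Y => if ρ Y < ρ X then u Y else w Y with hc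
          obtain ⟨u0, -, hu0⟩ := hrec T' c
          have hcsol : IsSolution (intervene M T' c) c := by
            intro Y
            by_cases hYT : Y ∈ T'
            · simp [intervene, if_pos hYT]
            · have hYlt : ρ Y < ρ X := by
                by_contra h
                exact hYT (Or.inr (by omega))
              have hYnVa : ¬(Y ∈ Va ∧ ρ Y < ρ X) := fun h => hYT (Or.inl h)
              simp only [intervene, if_neg hYT]
              have h1 : c Y = u Y := by simp [hc, if_pos hYlt]
              rw [h1, huF Y hYnVa]
              exact M.localDep Y u c fun W hW => by
                have hWY : ρ W ≤ ρ Y := hρ W Y hW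
                simp [hc, if_pos (show ρ W < ρ X by omega)]
          have hwsol : IsSolution (intervene M T' c) w := by
            intro Y
            by_cases hYT : Y ∈ T'
            · simp only [intervene, if_pos hYT]
              rcases hYT with ⟨hYa, hYX⟩ | hYX
              · rw [show c Y = u Y by simp [hc, if_pos hYX], huT Y hYa hYX]
              · simp [hc, show ¬ ρ Y < ρ X by omega]
            · have hYlt : ρ Y < ρ X := by
                by_contra h
                exact hYT (Or.inr (by omega))
              have hYnVa : Y ∉ Va := fun h => hYT (Or.inl ⟨h, hYlt⟩)
              simp only [intervene, if_neg hYT]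
              exact hwF Y (fun h => hYnVa (hS h))
          have hcw : c = w := by rw [hu0 c hcsol, hu0 w hwsol]
          intro W hW
          have := congrFun hcw W
          simpa [hc, if_pos hW] using this
        -- conclude a X = w X
        have hXeq : u X = w X := by
          rw [huF X (fun h => by omega)]
          rw [hwF X hXS]
          exact M.localDep X u w fun W hW => hlow W (hρa X hXa W hW)
        rw [ha X hXa, hσaw, hσw, hXeq]
  have keyVa : ∀ X ∈ Va, a X = w X := fun X hX => key (ρ X + 1) X hX (by omega)
  -- w solves intervene M Va a, hence equals v by uniqueness
  have hwsol : IsSolution (intervene M Va a) w := by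
    intro X
    by_cases hX : X ∈ Va
    · simp only [intervene, if_pos hX]
      exact (keyVa X hX).symm
    · simp only [intervene, if_neg hX]
      exact hwF X (fun h => hX (hS h))
  obtain ⟨u0, -, hu0⟩ := hrec Va a
  have : v = w := by rw [hu0 v hv, hu0 w hwsol]
  intro Z; rw [this]
end

section
/- Let (M, u) be a causal setting with (M, u) ⊨ φ, let X be a set of agent variables with (M, u) ⊨ X = x, and let W be a set of endogenous variables with witness setting w* such that (M, u) ⊨ W = w*. Then: there exists x' with (M, u) ⊨ [X ← x', W ← w*] ¬φ if and only if, in the causal CGS generated from (M^{W←w*}, u), the coalition of agents controlling X has a strategy F such that ¬φ holds in the leaf-state reached by F ∘ F_M (all other agents following the causal strategy profile). -/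
open Classical

variable {V : Type*} {Val : V → Type*}

lemma sol_congr {M1 M2 : CausalModel V Val}
    (h : ∀ X w, M1.F X w = M2.F X w) (w : ∀ X, Val X) :
    IsSolution M1 w ↔ IsSolution M2 w := by
  unfold IsSolution
  exact forall_congr' fun X => by rw [h]

lemma double_intervene_F (N : CausalModel V Val) (T T' : Set V) (b b' c : ∀ X, Val X)
    (hc1 : ∀ X ∈ T', c X = b' X) (hc2 : ∀ X ∉ T', c X = b X)
    (X : V) (w : ∀ Y, Val Y) :
    (intervene (intervene N T b) T' b').F X w
      = (intervene N (T' ∪ T) c).F X w := by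
  by_cases h1 : X ∈ T' <;> by_cases h2 : X ∈ T <;>
    simp [intervene, h1, h2, hc1, hc2]

lemma uniq_double (N : CausalModel V Val) (T T' : Set V) (b b' c : ∀ X, Val X)
    (hc1 : ∀ X ∈ T', c X = b' X) (hc2 : ∀ X ∉ T', c X = b X)
    (h : ∃! u, IsSolution (intervene N (T' ∪ T) c) u) :
    ∃! u, IsSolution (intervene (intervene N T b) T' b') u :=
  (existsUnique_congr fun w =>
    sol_congr (double_intervene_F N T T' b b' c hc1 hc2) w).mpr h

lemma agree_lemma (B : CausalModel V Val) (D : Set V) (u v : ∀ X, Val X)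
    (hu : ∀ Z ∈ D, u Z = B.F Z u)
    (hv : IsSolution B v)
    (hD : ∀ Y Z, Z ∈ D → B.dep Y Z → Y ∈ D)
    (huniq : ∃! w, IsSolution (intervene B Dᶜ v) w) :
    ∀ Z ∈ D, u Z = v Z := by
  classical
  set h : ∀ X, Val X := fun Y => if Y ∈ D then u Y else v Y with hh
  have hsolh : IsSolution (intervene B Dᶜ v) h := by
    intro Z
    by_cases hZ : Z ∈ D
    · have hF : (intervene B Dᶜ v).F Z h = B.F Z h := by
        simp [intervene, hZ]
      have heq : B.F Z h = B.F Z u :=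
        B.localDep Z h u (fun Y hY => by
          have : Y ∈ D := hD Y Z hZ hY
          simp [hh, this])
      rw [hF, heq]
      simpa [hh, hZ] using hu Z hZ
    · simp [intervene, hZ, hh]
  have hsolv : IsSolution (intervene B Dᶜ v) v := by
    intro Z
    by_cases hZ : Z ∈ D
    · simpa [intervene, hZ] using hv Z
    · simp [intervene, hZ]
  have hhv : h = v := huniq.unique hsolh hsolv
  intro Z hZ
  have := congrFun hhv Z
  simpa [hh, hZ] using this

/-- Proposition 4.6 (condition AC2 of the modified HP definition, with a given
witness `W = w*`): assume `(M, u) ⊨ φ`, `(M, u) ⊨ X = x` and `(M, u) ⊨ W = w*`,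
where the cause variables `S` are agent variables.  Then there exists a setting
`x'` with `(M, u) ⊨ [X ← x', W ← w*] ¬φ` iff, in the causal CGS generated from
`(M^{W ← w*}, u)`, the coalition of agents controlling `S` has a strategy such
that `¬φ` holds in the leaf-state reached when all other agents follow the
causal strategy profile of `M^{W ← w*}`. -/
theorem cause_with_witness_iff_strategy
    {V : Type*} {Val : V → Type*} (M : CausalModel V Val)
    (Va : Set V) (ρ : V → ℕ)
    (hρ : ∀ X Y, M.dep X Y → ρ X ≤ ρ Y)
    (hρa : ∀ X ∈ Va, ∀ Y, M.dep Y X → ρ Y < ρ X)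
    (hrec : ∀ (T : Set V) (b : ∀ X, Val X), ∃! u, IsSolution (intervene M T b) u)
    (φ : (∀ X, Val X) → Prop)
    (S W : Set V) (hS : S ⊆ Va) (hdisj : Disjoint S W)
    (x wstar : ∀ X, Val X)
    (hrec' : ∀ (T : Set V) (b : ∀ X, Val X),
      ∃! u, IsSolution (intervene (intervene M W wstar) T b) u)
    (v₀ : ∀ X, Val X) (hv₀ : IsSolution M v₀)
    (hφ : φ v₀) (hx : ∀ X ∈ S, v₀ X = x X) (hw : ∀ X ∈ W, v₀ X = wstar X) :
    (∃ x' : ∀ X, Val X,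
        Sat (intervene M (S ∪ W) (fun X => if X ∈ S then x' X else wstar X))
          (fun v => ¬ φ v)) ↔
      (∃ (σ : ∀ X : V, (∀ Y, Val Y) → Val X) (a v : ∀ X, Val X),
        IsStrategy Va ρ σ ∧
        (∀ X ∈ Va, X ∉ S → CausalChoice (intervene M W wstar) Va ρ σ X) ∧
        IsPlay Va σ a ∧
        IsSolution (intervene (intervene M W wstar) Va a) v ∧ ¬ φ v) := by
  classical
  set N := intervene M W wstar with hN
  set T : V → Set V := fun X => {Y | Y ∈ Va ∧ ρ Y < ρ X} with hT
  constructor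
  · rintro ⟨x', hsat⟩
    set b : ∀ X, Val X := fun X => if X ∈ S then x' X else wstar X with hb
    obtain ⟨vs, hvs, -⟩ := hrec (S ∪ W) b
    have hvsF : ∀ Z, vs Z = if Z ∈ S ∪ W then b Z else M.F Z vs := fun Z => by
      simpa [intervene] using hvs Z
    -- values of vs on S and W
    have hvsS : ∀ Z ∈ S, vs Z = x' Z := by
      intro Z hZ
      have := hvsF Z
      simp [Set.mem_union, hZ, hb] at this
      simpa [hZ] using this
    have hvsW : ∀ Z ∈ W, vs Z = wstar Z := by
      intro Z hZ
      have hZS : Z ∉ S := fun h => hdisj.ne_of_mem h hZ rfl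
      have := hvsF Z
      simp [Set.mem_union, hZ, hb, hZS] at this
      exact this
    set σ : ∀ X : V, (∀ Y, Val Y) → Val X :=
      fun X h => if X ∈ S then x' X else Classical.choose (hrec' (T X) h) X with hσ
    refine ⟨σ, vs, vs, ?_, ?_, ?_, ?_, ?_⟩
    · -- IsStrategy
      intro X hX h h' hagree
      by_cases hXS : X ∈ S
      · simp [hσ, hXS]
      · simp only [hσ, if_neg hXS]
        set w1 := Classical.choose (hrec' (T X) h) with hw1
        have hw1sol : IsSolution (intervene N (T X) h) w1 :=
          (Classical.choose_spec (hrec' (T X) h)).1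
        have hFeq : ∀ Z z, (intervene N (T X) h).F Z z = (intervene N (T X) h').F Z z := by
          intro Z z
          by_cases hZ : Z ∈ T X
          · have : h Z = h' Z := hagree Z hZ.1 hZ.2
            simp [intervene, hZ, this]
          · simp [intervene, hZ]
        have hw1sol' : IsSolution (intervene N (T X) h') w1 :=
          (sol_congr hFeq w1).mp hw1sol
        have := (hrec' (T X) h').unique hw1sol'
          (Classical.choose_spec (hrec' (T X) h')).1
        rw [this]
    · -- CausalChoice
      intro X hX hXS h v hvsol
      have := (hrec' (T X) h).unique (Classical.choose_spec (hrec' (T X) h)).1 hvsol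
      simp only [hσ, if_neg hXS]
      rw [this]
    · -- IsPlay
      intro X hX
      by_cases hXS : X ∈ S
      · simp [hσ, hXS, hvsS X hXS]
      · simp only [hσ, if_neg hXS]
        set w := Classical.choose (hrec' (T X) vs) with hwdef
        have hwsol : IsSolution (intervene N (T X) vs) w :=
          (Classical.choose_spec (hrec' (T X) vs)).1
        set D : Set V := {Y | ρ Y < ρ X} ∪ {X} with hD
        have key : ∀ Z ∈ D, vs Z = (intervene N (T X) vs).F Z vs := by
          intro Z hZ
          by_cases hZT : Z ∈ T X
          · simp [intervene, hZT]
          · by_cases hZW : Z ∈ W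
            · simp [intervene, hZT, hN, hZW, hvsW Z hZW]
            · have hZS : Z ∉ S := by
                intro hZS
                have hZVa : Z ∈ Va := hS hZS
                rcases hZ with hZ | hZ
                · exact hZT ⟨hZVa, hZ⟩
                · exact hXS (by simpa [Set.mem_singleton_iff.mp hZ] using hZS)
              have := hvsF Z
              simp [Set.mem_union, hZS, hZW] at this
              simpa [intervene, hZT, hN, hZW] using this
        have hclosed : ∀ Y Z, Z ∈ D → (intervene N (T X) vs).dep Y Z → Y ∈ D := by
          intro Y Z hZ hdep
          obtain ⟨hZT, hZW, hdepM⟩ := hdep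
          rcases hZ with hZ | hZ
          · exact Or.inl (lt_of_le_of_lt (hρ Y Z hdepM) hZ)
          · have : Z = X := hZ
            subst this
            exact Or.inl (hρa Z hX Y hdepM)
        have huniq := uniq_double N (T X) Dᶜ vs w
          (fun Y => if Y ∈ Dᶜ then w Y else vs Y)
          (fun Y hY => by simp [hY]) (fun Y hY => by simp [hY])
          (hrec' (Dᶜ ∪ T X) (fun Y => if Y ∈ Dᶜ then w Y else vs Y))
        have := agree_lemma (intervene N (T X) vs) D vs w key hwsol hclosed huniq
        exact this X (Or.inr rfl)
    · -- vs solves intervene N Va vs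
      intro Z
      by_cases hZVa : Z ∈ Va
      · simp [intervene, hZVa]
      · by_cases hZW : Z ∈ W
        · simp [intervene, hZVa, hN, hZW, hvsW Z hZW]
        · have hZS : Z ∉ S := fun h => hZVa (hS h)
          have := hvsF Z
          simp [Set.mem_union, hZS, hZW] at this
          simpa [intervene, hZVa, hN, hZW] using this
    · exact hsat vs hvs
  · rintro ⟨σ, a, v, hstrat, hcc, hplay, hvsol, hnφ⟩
    refine ⟨a, ?_⟩
    set b : ∀ X, Val X := fun X => if X ∈ S then a X else wstar X with hb
    -- v solves intervene M (S ∪ W) b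
    have hvB : ∀ Z, v Z = (intervene N Va a).F Z v := hvsol
    have hvVa : ∀ Z ∈ Va, v Z = a Z := by
      intro Z hZ
      simpa [intervene, hZ] using hvB Z
    have key : IsSolution (intervene M (S ∪ W) b) v := by
      intro Z
      by_cases hZVa : Z ∈ Va
      · -- get the causal-choice solution for Z if Z ∉ S
        by_cases hZS : Z ∈ S
        · simp [intervene, Set.mem_union, hZS, hb, hvVa Z hZVa]
        · obtain ⟨uZ, huZ, -⟩ := hrec' (T Z) a
          have haZ : a Z = uZ Z := by
            rw [hplay Z hZVa]
            exact hcc Z hZVa hZS a uZ huZ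
          have hZT : Z ∉ T Z := fun h => lt_irrefl _ h.2
          by_cases hZW : Z ∈ W
          · have : uZ Z = wstar Z := by simpa [intervene, hZT, hN, hZW] using huZ Z
            simp [intervene, Set.mem_union, hZS, hZW, hb, hvVa Z hZVa, haZ, this]
          · have huZZ : uZ Z = M.F Z uZ := by
              simpa [intervene, hZT, hN, hZW] using huZ Z
            -- agree uZ with v on ranks below ρ Z
            set D : Set V := {Y | ρ Y < ρ Z} with hD
            have hu' : ∀ Y ∈ D, uZ Y = (intervene N Va a).F Y uZ := by
              intro Y hY
              by_cases hYVa : Y ∈ Va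
              · have hYT : Y ∈ T Z := ⟨hYVa, hY⟩
                have := huZ Y
                simp [intervene, hYT] at this
                simpa [intervene, hYVa] using this
              · have hYT : Y ∉ T Z := fun h => hYVa h.1
                have := huZ Y
                by_cases hYW : Y ∈ W
                · simp [intervene, hYT, hN, hYW] at this
                  simpa [intervene, hYVa, hN, hYW] using this
                · simp [intervene, hYT, hN, hYW] at this
                  simpa [intervene, hYVa, hN, hYW] using this
            have hclosed : ∀ Y' Y, Y ∈ D → (intervene N Va a).dep Y' Y → Y' ∈ D := by
              intro Y' Y hY hdep
              obtain ⟨hYVa, hYW, hdepM⟩ := hdep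
              exact lt_of_le_of_lt (hρ Y' Y hdepM) hY
            have huniq := uniq_double N Va Dᶜ a v
              (fun Y => if Y ∈ Dᶜ then v Y else a Y)
              (fun Y hY => by simp [hY]) (fun Y hY => by simp [hY])
              (hrec' (Dᶜ ∪ Va) (fun Y => if Y ∈ Dᶜ then v Y else a Y))
            have hagree := agree_lemma (intervene N Va a) D uZ v hu' hvsol hclosed huniq
            have hFeq : M.F Z uZ = M.F Z v :=
              M.localDep Z uZ v fun Y hY => hagree Y (hρa Z hZVa Y hY)
            have hZS' : Z ∉ S ∪ W := by simp [Set.mem_union, hZS, hZW]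
            have : v Z = M.F Z v := by
              rw [hvVa Z hZVa, haZ, huZZ, hFeq]
            simpa [intervene, hZS', hZS, hZW] using this
      · have hZS : Z ∉ S := fun h => hZVa (hS h)
        by_cases hZW : Z ∈ W
        · have : v Z = wstar Z := by simpa [intervene, hZVa, hN, hZW] using hvB Z
          simp [intervene, Set.mem_union, hZW, hb, hZS, this]
        · have : v Z = M.F Z v := by simpa [intervene, hZVa, hN, hZW] using hvB Z
          simpa [intervene, Set.mem_union, hZS, hZW] using this
    intro t ht
    have : t = v := ((hrec (S ∪ W) b).unique ht key)
    rw [this]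
    exact hnφ
end

section
/- Let (M, u) be a causal setting with (M, u) ⊨ φ and let X ⊆ V_a be agent variables with (M, u) ⊨ X = x. Then X = x is a but-for cause of φ in (M, u) (i.e., there exists a setting x' with (M, u) ⊨ [X ← x'] ¬φ) if and only if, in the causal CGS generated from (M, u), the coalition of agents controlling X has a strategy F such that ¬φ holds in the leaf-state reached when all other agents follow the causal strategy profile F_M. -/
open Classical

variable {V : Type*} {Val : V → Type*}

/-- A solution of an intervened model only depends on the values of the
intervention function on the intervened set. -/
lemma isSolution_intervene_congr (M : CausalModel V Val) (T : Set V)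
    {h h' : ∀ X, Val X} (hh : ∀ Y ∈ T, h Y = h' Y) {v : ∀ X, Val X}
    (hv : IsSolution (intervene M T h) v) : IsSolution (intervene M T h') v := by
  intro X
  have := hv X
  simp only [intervene] at this ⊢
  by_cases hX : X ∈ T
  · rw [if_pos hX] at this ⊢
    rw [this, hh X hX]
  · rwa [if_neg hX] at this ⊢

/-- Gluing / uniqueness lemma: a solution `w` of the model intervened with the
"history so far" (agent variables of rank `< r` pinned to `b`) agrees below
rank `r` with any `c` that matches `b` on those agent variables and solves the
original equations on non-agent variables of rank `< r`. -/
lemma glue_low (M : CausalModel V Val) (Va : Set V) (ρ : V → ℕ)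
    (hρ : ∀ X Y, M.dep X Y → ρ X ≤ ρ Y)
    (hrec : ∀ (T : Set V) (b : ∀ X, Val X), ∃! u, IsSolution (intervene M T b) u)
    (r : ℕ) (b w c : ∀ X, Val X)
    (hw : IsSolution (intervene M {Y | Y ∈ Va ∧ ρ Y < r} b) w)
    (hcT : ∀ Y, Y ∈ Va → ρ Y < r → c Y = b Y)
    (hcU : ∀ Y, Y ∉ Va → ρ Y < r → c Y = M.F Y c) :
    ∀ Y, ρ Y < r → w Y = c Y := by
  classical
  set N : Set V := {Y | ¬ ρ Y < r ∨ (Y ∈ Va ∧ ρ Y < r)} with hN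
  have hc : IsSolution (intervene M N c) c := by
    intro Y
    simp only [intervene]
    by_cases hY : Y ∈ N
    · rw [if_pos hY]
    · rw [if_neg hY]
      simp only [hN, Set.mem_setOf_eq, not_or, not_not, not_and] at hY
      exact hcU Y (fun hYa => hY.2 hYa hY.1) hY.1
  have hw'' : IsSolution (intervene M N c)
      (fun Y => if hY : ρ Y < r then w Y else c Y) := by
    intro Y
    simp only [intervene]
    by_cases hY : Y ∈ N
    · rw [if_pos hY]
      simp only [hN, Set.mem_setOf_eq] at hY
      rcases hY with hY | ⟨hYa, hYr⟩
      · rw [dif_neg hY]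
      · rw [dif_pos hYr]
        have := hw Y
        simp only [intervene, Set.mem_setOf_eq] at this
        rw [if_pos ⟨hYa, hYr⟩] at this
        rw [this, hcT Y hYa hYr]
    · rw [if_neg hY]
      simp only [hN, Set.mem_setOf_eq, not_or, not_not, not_and] at hY
      obtain ⟨hYr, hYa⟩ := hY
      rw [dif_pos hYr]
      have := hw Y
      simp only [intervene, Set.mem_setOf_eq] at this
      rw [if_neg (by intro hmem; exact hYa hmem.1 hYr)] at this
      rw [this]
      refine M.localDep Y _ _ fun Z hZ => ?_
      have hZr : ρ Z < r := lt_of_le_of_lt (hρ Z Y hZ) hYr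
      rw [dif_pos hZr]
  have heq := (hrec N c).unique hw'' hc
  intro Y hY
  have := congrFun heq Y
  simpa only [dif_pos hY] using this

/-- Corollary 4.8: assume `(M, u) ⊨ φ` and `(M, u) ⊨ X = x`, where the cause
variables `S` are agent variables.  Then `X = x` is a but-for cause of `φ` in
`(M, u)` — i.e. there is a setting `x'` with `(M, u) ⊨ [X ← x'] ¬φ` — iff, in
the causal CGS generated from `(M, u)`, the coalition of agents controlling `S`
has a strategy such that `¬φ` holds in the leaf-state reached when all other
agents follow the causal strategy profile `F_M`. -/
theorem butFor_cause_iff_strategy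
    {V : Type*} {Val : V → Type*} (M : CausalModel V Val)
    (Va : Set V) (ρ : V → ℕ)
    (hρ : ∀ X Y, M.dep X Y → ρ X ≤ ρ Y)
    (hρa : ∀ X ∈ Va, ∀ Y, M.dep Y X → ρ Y < ρ X)
    (hrec : ∀ (T : Set V) (b : ∀ X, Val X), ∃! u, IsSolution (intervene M T b) u)
    (φ : (∀ X, Val X) → Prop)
    (S : Set V) (hS : S ⊆ Va) (x : ∀ X, Val X)
    (v₀ : ∀ X, Val X) (hv₀ : IsSolution M v₀)
    (hφ : φ v₀) (hx : ∀ X ∈ S, v₀ X = x X) :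
    (∃ x' : ∀ X, Val X, Sat (intervene M S x') (fun v => ¬ φ v)) ↔
      (∃ (σ : ∀ X : V, (∀ Y, Val Y) → Val X) (a v : ∀ X, Val X),
        IsStrategy Va ρ σ ∧
        (∀ X ∈ Va, X ∉ S → CausalChoice M Va ρ σ X) ∧
        IsPlay Va σ a ∧
        IsSolution (intervene M Va a) v ∧ ¬ φ v) := by
  classical
  constructor
  · rintro ⟨x', hx'⟩
    obtain ⟨a, ha, -⟩ := hrec S x'
    -- candidate causal choice: the unique solution after intervening with the history
    set sol : ∀ (X : V) (h : ∀ Y, Val Y), ∀ Z, Val Z :=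
      fun X h => (hrec {Y | Y ∈ Va ∧ ρ Y < ρ X} h).exists.choose with hsoldef
    have hsol : ∀ X h, IsSolution (intervene M {Y | Y ∈ Va ∧ ρ Y < ρ X} h) (sol X h) :=
      fun X h => (hrec {Y | Y ∈ Va ∧ ρ Y < ρ X} h).exists.choose_spec
    set σ : ∀ X : V, (∀ Y, Val Y) → Val X :=
      fun X h => if X ∈ S then x' X else sol X h X with hσdef
    -- `a` is a solution of the original equations off `S`
    have haoff : ∀ Y, Y ∉ S → a Y = M.F Y a := by
      intro Y hY
      have := ha Y
      simp only [intervene] at this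
      rwa [if_neg hY] at this
    have haon : ∀ Y, Y ∈ S → a Y = x' Y := by
      intro Y hY
      have := ha Y
      simp only [intervene] at this
      rwa [if_pos hY] at this
    refine ⟨σ, a, a, ?_, ?_, ?_, ?_, ?_⟩
    · -- IsStrategy
      intro X hX h h' hagree
      by_cases hXS : X ∈ S
      · simp only [hσdef, if_pos hXS]
      · simp only [hσdef, if_neg hXS]
        have h1 : IsSolution (intervene M {Y | Y ∈ Va ∧ ρ Y < ρ X} h') (sol X h) :=
          isSolution_intervene_congr M _ (fun Y hY => hagree Y hY.1 hY.2) (hsol X h)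
        have := (hrec {Y | Y ∈ Va ∧ ρ Y < ρ X} h').unique h1 (hsol X h')
        exact congrFun this X
    · -- CausalChoice off S
      intro X hX hXS h v hv
      have := (hrec {Y | Y ∈ Va ∧ ρ Y < ρ X} h).unique (hsol X h) hv
      simp only [hσdef, if_neg hXS]
      exact congrFun this X
    · -- IsPlay
      intro X hX
      by_cases hXS : X ∈ S
      · simp only [hσdef, if_pos hXS]
        exact haon X hXS
      · simp only [hσdef, if_neg hXS]
        have hglue : ∀ Y, ρ Y < ρ X → sol X a Y = a Y :=
          glue_low M Va ρ hρ hrec (ρ X) a (sol X a) a (hsol X a)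
            (fun Y _ _ => rfl) (fun Y hYa _ => haoff Y (fun hYS => hYa (hS hYS)))
        have hXeq := hsol X a X
        simp only [intervene, Set.mem_setOf_eq] at hXeq
        rw [if_neg (by simp)] at hXeq
        rw [hXeq]
        have : M.F X (sol X a) = M.F X a :=
          M.localDep X _ _ fun Z hZ => hglue Z (hρa X hX Z hZ)
        rw [this] at hXeq ⊢
        exact haoff X hXS
    · -- a is a solution of intervene M Va a
      intro Y
      simp only [intervene]
      by_cases hY : Y ∈ Va
      · rw [if_pos hY]
      · rw [if_neg hY]
        exact haoff Y (fun hYS => hY (hS hYS))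
    · exact hx' a ha
  · rintro ⟨σ, a, v, hstrat, hcc, hplay, hsolv, hnφ⟩
    refine ⟨a, ?_⟩
    have hvVa : ∀ Y, Y ∈ Va → v Y = a Y := by
      intro Y hY
      have := hsolv Y
      simp only [intervene] at this
      rwa [if_pos hY] at this
    have hvoff : ∀ Y, Y ∉ Va → v Y = M.F Y v := by
      intro Y hY
      have := hsolv Y
      simp only [intervene] at this
      rwa [if_neg hY] at this
    -- v is a solution of intervene M S a
    have hvsol : IsSolution (intervene M S a) v := by
      intro Y
      simp only [intervene]
      by_cases hYS : Y ∈ S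
      · rw [if_pos hYS]
        exact hvVa Y (hS hYS)
      · rw [if_neg hYS]
        by_cases hYa : Y ∈ Va
        · obtain ⟨w, hw, -⟩ := hrec {Z | Z ∈ Va ∧ ρ Z < ρ Y} a
          have haw : a Y = w Y := (hplay Y hYa).trans (hcc Y hYa hYS a w hw)
          have hglue : ∀ Z, ρ Z < ρ Y → w Z = v Z :=
            glue_low M Va ρ hρ hrec (ρ Y) a w v hw
              (fun Z hZa _ => hvVa Z hZa) (fun Z hZa _ => hvoff Z hZa)
          have hwY := hw Y
          simp only [intervene, Set.mem_setOf_eq] at hwY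
          rw [if_neg (by simp)] at hwY
          have : M.F Y w = M.F Y v :=
            M.localDep Y _ _ fun Z hZ => hglue Z (hρa Y hYa Z hZ)
          rw [hvVa Y hYa, haw, hwY, this]
        · exact hvoff Y hYa
    intro u hu
    have := (hrec S a).unique hu hvsol
    rw [this]
    exact hnφ
end
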